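/- arXiv:2103.10612 — 8 statements merged into one kernel-verified Lean document; each statement's English description precedes it below -/
import Mathlib

section
/- Let q be a prime power, n ≥ 3, and let (a_1,...,a_n) ∈ F_q[t]^n be a tuple of polynomials generating the unit ideal, with d = max_i deg(a_i), such that for every i, deg(a_i) ≤ max_{j≠i} deg(a_j), and for every irreducible polynomial p, p divides at most n-2 of the a_i. Let N ≥ d, let V_N be the set of polynomials of degree < N, fix j with 1 ≤ j ≤ n and fix x_j ∈ V_N. Then the number of tuples (x_1,...,x_{j-1},x_{j+1},...,x_n) ∈ V_N^{n-1} with Σ_{i=1}^n a_i x_i = 0 equals q^{N(n-2)-d}. -/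
open scoped Classical

open Polynomial

/-!
Fixing `x_j` turns the count into a fibre of the `F`-linear map `y ↦ ∑_{i ≠ j} a_i y_i` on
`V_N^{n-1}`. No irreducible polynomial divides all the `a_i` with `i ≠ j`, so they generate the
unit ideal, and by the degree hypothesis one of them, `a_{i₀}`, has the maximal degree `d`.
Reducing Bézout coefficients modulo `a_{i₀}` shows that the map is onto `V_{N+d}`, which contains
`a_j x_j`; hence the fibre has `q^{N(n-1) - (N+d)} = q^{N(n-2) - d}` elements.
-/

theorem Ideal.exists_irreducible_forall_dvd_of_span_ne_top {R : Type*} [CommRing R] [IsDomain R]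
    [IsPrincipalIdealRing R] (hR : ¬IsField R) {s : Set R} (hs : Ideal.span s ≠ ⊤) :
    ∃ p : R, Irreducible p ∧ ∀ x ∈ s, p ∣ x := by
  obtain ⟨M, hM, hsM⟩ := Ideal.exists_le_maximal _ hs
  have := hM.isPrime
  refine ⟨Submodule.IsPrincipal.generator M,
    (Submodule.IsPrincipal.prime_generator_of_isPrime M
      (Ring.ne_bot_of_isMaximal_of_not_isField hM hR)).irreducible, fun x hx => ?_⟩
  exact (Submodule.IsPrincipal.mem_iff_generator_dvd M).1 (hsM (Ideal.subset_span hx))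

theorem Finset.exists_ne_forall_le_of_le_sup_erase {ι α : Type*} [Fintype ι] [DecidableEq ι]
    [Nontrivial ι] [LinearOrder α] [OrderBot α] {f : ι → α} {j : ι}
    (hj : f j ≤ (Finset.univ.erase j).sup f) : ∃ i₀ ≠ j, ∀ i, f i ≤ f i₀ := by
  obtain ⟨k, hk⟩ := exists_ne j
  obtain ⟨i₀, hi₀, hmax⟩ := Finset.exists_max_image (Finset.univ.erase j) f
    ⟨k, Finset.mem_erase.2 ⟨hk, Finset.mem_univ k⟩⟩
  refine ⟨i₀, Finset.ne_of_mem_erase hi₀, fun i => ?_⟩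
  rcases eq_or_ne i j with rfl | hij
  · exact hj.trans (Finset.sup_le hmax)
  · exact hmax i (Finset.mem_erase.2 ⟨hij, Finset.mem_univ i⟩)

theorem LinearMap.natCard_preimage_singleton {K V W : Type*} [DivisionRing K] [AddCommGroup V]
    [Module K V] [FiniteDimensional K V] [AddCommGroup W] [Module K W] (φ : V →ₗ[K] W) {w : W}
    (hw : w ∈ LinearMap.range φ) :
    Nat.card (φ ⁻¹' {w}) =
      Nat.card K ^ (Module.finrank K V - Module.finrank K (LinearMap.range φ)) := by
  obtain ⟨v, rfl⟩ := hw
  rw [show Nat.card (φ ⁻¹' {φ v}) = Nat.card (LinearMap.ker φ) from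
      Nat.card_congr (φ.toAddMonoidHom.fiberEquivKer v),
    Module.natCard_eq_pow_finrank (K := K), ← φ.finrank_range_add_finrank_ker,
    Nat.add_sub_cancel_left]

theorem ncard_setOf_apply_eq_and_sum_mul_eq_zero {ι R : Type*} [Fintype ι] [DecidableEq ι]
    [Ring R] (a : ι → R) (P : R → Prop) (j : ι) {c : R} (hc : P c) :
    {x : ι → R | x j = c ∧ (∀ i, P (x i)) ∧ ∑ i, a i * x i = 0}.ncard =
      {y : {i // i ≠ j} → R |
        (∀ i, P (y i)) ∧ ∑ i : {i // i ≠ j}, a i * y i = -(a j * c)}.ncard := by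
  set e := Equiv.piSplitAt j fun _ => R
  have hsplit : {x : ι → R | x j = c ∧ (∀ i, P (x i)) ∧ ∑ i, a i * x i = 0} =
      e ⁻¹' ({c} ×ˢ {y | (∀ i, P (y i)) ∧ ∑ i : {i // i ≠ j}, a i * y i = -(a j * c)}) := by
    ext x
    simp only [Set.mem_ofPred_eq, Set.mem_preimage, Set.mem_prod, Set.mem_singleton_iff, e,
      Equiv.piSplitAt_apply, Fintype.sum_eq_add_sum_subtype_ne _ j, eq_neg_iff_add_eq_zero,
      add_comm (a j * x j)]
    constructor
    · rintro ⟨rfl, hP, hsum⟩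
      exact ⟨rfl, fun i => hP i, hsum⟩
    · rintro ⟨rfl, hP, hsum⟩
      refine ⟨rfl, fun i => ?_, hsum⟩
      rcases eq_or_ne i j with rfl | hi
      exacts [hc, hP ⟨i, hi⟩]
  rw [hsplit, Set.ncard_preimage_of_injective_subset_range e.injective (by simp),
    Set.ncard_prod, Set.ncard_singleton, one_mul]

namespace Polynomial

theorem degree_mul_lt_of_le_of_lt {R : Type*} [Semiring R] {p q : R[X]} {D N : ℕ}
    (hp : p.degree ≤ D) (hq : q.degree < N) : (p * q).degree < ↑(N + D) := by
  rcases eq_or_ne p 0 with rfl | hp0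
  · simp
  rw [Nat.cast_add, add_comm]
  exact (degree_mul_le p q).trans_lt
    (WithBot.add_lt_add_of_le_of_lt (degree_ne_bot.2 hp0) hp hq)

theorem degree_lt_of_degree_mul_lt {R : Type*} [Semiring R] [NoZeroDivisors R] {g c : R[X]}
    {N : ℕ} (hg : g ≠ 0) (h : (g * c).degree < ↑(N + g.natDegree)) : c.degree < N := by
  rw [degree_mul, degree_eq_natDegree hg, Nat.cast_add, add_comm (N : WithBot ℕ)] at h
  exact (WithBot.add_lt_add_iff_left WithBot.coe_ne_bot).1 h

theorem finrank_degreeLT (R : Type*) [Semiring R] [StrongRankCondition R] (N : ℕ) :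
    Module.finrank R (degreeLT R N) = N := by
  rw [Module.finrank_eq_card_basis (degreeLT.basis R N), Fintype.card_fin]

variable {F : Type*} [Field F] {ι : Type*} [Fintype ι]

theorem exists_sum_mul_eq_of_degree_lt {b : ι → F[X]} (hb : Ideal.span (Set.range b) = ⊤)
    {i₀ : ι} (hi₀ : ∀ i, (b i).degree ≤ (b i₀).degree) {N : ℕ} (hN : (b i₀).natDegree ≤ N)
    {f : F[X]} (hf : f.degree < ↑(N + (b i₀).natDegree)) :
    ∃ x : ι → F[X], (∀ i, (x i).degree < N) ∧ ∑ i, b i * x i = f := by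
  set g := b i₀
  have hg : g ≠ 0 := by
    intro hg
    refine top_ne_bot (hb.symm.trans (Ideal.span_eq_bot.2 ?_))
    rintro _ ⟨i, rfl⟩
    exact degree_eq_bot.1 (le_bot_iff.1 (by simpa [g, hg] using hi₀ i))
  have hbg : ∀ i, (b i).degree ≤ ↑g.natDegree := fun i => (hi₀ i).trans degree_le_natDegree
  obtain ⟨z, hz⟩ := Ideal.mem_span_range_iff_exists_fun.1 (hb ▸ Submodule.mem_top : f ∈ _)
  -- reduce every Bézout coefficient modulo `g` and collect the quotients in the `i₀`-th one
  set r : ι → F[X] := fun i => z i % g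
  set c := ∑ i, z i / g * b i
  have hsum : ∑ i, b i * r i + g * c = f := by
    rw [← hz, Finset.mul_sum, ← Finset.sum_add_distrib]
    refine Finset.sum_congr rfl fun i _ => ?_
    linear_combination b i * EuclideanDomain.mod_add_div (z i) g
  have hr : ∀ i, (r i).degree < g.natDegree := fun i =>
    (degree_mod_lt _ hg).trans_le degree_le_natDegree
  have hc : c.degree < N := by
    refine degree_lt_of_degree_mul_lt hg ?_
    rw [show g * c = f - ∑ i, b i * r i by rw [← hsum]; ring]
    refine (degree_sub_le _ _).trans_lt (max_lt hf ?_)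
    refine (degree_sum_le _ _).trans_lt
      ((Finset.sup_lt_iff (WithBot.bot_lt_coe _)).2 fun i _ => ?_)
    exact (degree_mul_lt_of_le_of_lt (hbg i) (hr i)).trans_le (by gcongr)
  refine ⟨r + Pi.single i₀ c, fun i => ?_, ?_⟩
  · rw [← mem_degreeLT, Pi.add_apply, Pi.single_apply]
    refine add_mem (mem_degreeLT.2 ((hr i).trans_le (mod_cast hN))) ?_
    split_ifs
    exacts [mem_degreeLT.2 hc, zero_mem _]
  · simpa [mul_add, Finset.sum_add_distrib, Pi.single_apply] using hsum

noncomputable def linearCombinationDegreeLT (b : ι → F[X]) (N : ℕ) :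
    (ι → degreeLT F N) →ₗ[F] F[X] :=
  ∑ i, LinearMap.mulLeft F (b i) ∘ₗ (degreeLT F N).subtype ∘ₗ LinearMap.proj i

@[simp]
theorem linearCombinationDegreeLT_apply (b : ι → F[X]) (N : ℕ) (y : ι → degreeLT F N) :
    linearCombinationDegreeLT b N y = ∑ i, b i * y i := by
  simp [linearCombinationDegreeLT]

theorem range_linearCombinationDegreeLT {b : ι → F[X]} (hb : Ideal.span (Set.range b) = ⊤)
    {i₀ : ι} (hi₀ : ∀ i, (b i).degree ≤ (b i₀).degree) {N : ℕ} (hN : (b i₀).natDegree ≤ N) :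
    LinearMap.range (linearCombinationDegreeLT b N) = degreeLT F (N + (b i₀).natDegree) := by
  ext f
  constructor
  · rintro ⟨y, rfl⟩
    rw [linearCombinationDegreeLT_apply]
    exact Submodule.sum_mem _ fun i _ => mem_degreeLT.2 <|
      degree_mul_lt_of_le_of_lt ((hi₀ i).trans degree_le_natDegree) (mem_degreeLT.1 (y i).2)
  · intro hf
    obtain ⟨x, hx, rfl⟩ := exists_sum_mul_eq_of_degree_lt hb hi₀ hN (mem_degreeLT.1 hf)
    exact ⟨fun i => ⟨x i, mem_degreeLT.2 (hx i)⟩, by simp⟩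

theorem ncard_setOf_sum_mul_eq [Fintype F] {b : ι → F[X]} (hb : Ideal.span (Set.range b) = ⊤)
    {i₀ : ι} (hi₀ : ∀ i, (b i).degree ≤ (b i₀).degree) {N : ℕ} (hN : (b i₀).natDegree ≤ N)
    {f : F[X]} (hf : f.degree < ↑(N + (b i₀).natDegree)) :
    {y : ι → F[X] | (∀ i, (y i).degree < N) ∧ ∑ i, b i * y i = f}.ncard =
      Fintype.card F ^ (Fintype.card ι * N - (N + (b i₀).natDegree)) := by
  set φ := linearCombinationDegreeLT b N
  have hrange := range_linearCombinationDegreeLT hb hi₀ hN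
  have hset : {y : ι → F[X] | (∀ i, (y i).degree < N) ∧ ∑ i, b i * y i = f} =
      (fun y i => (y i : F[X])) '' (φ ⁻¹' {f}) := by
    ext y
    constructor
    · rintro ⟨hy, rfl⟩
      exact ⟨fun i => ⟨y i, mem_degreeLT.2 (hy i)⟩, by simp [φ], rfl⟩
    · rintro ⟨y, hy, rfl⟩
      exact ⟨fun i => mem_degreeLT.1 (y i).2, by simpa [φ] using hy⟩
  have hinj : Function.Injective fun (y : ι → degreeLT F N) i => (y i : F[X]) := by
    intro y y' h
    funext i
    exact Subtype.ext (congrFun h i)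
  rw [hset, Set.ncard_image_of_injective _ hinj, ← Nat.card_coe_set_eq,
    φ.natCard_preimage_singleton (hrange ▸ mem_degreeLT.2 hf), hrange, Module.finrank_pi_fintype,
    finrank_degreeLT, finrank_degreeLT, Finset.sum_const, Finset.card_univ, smul_eq_mul,
    Nat.card_eq_fintype_card]

end Polynomial

theorem smyth_count_solutions_general (F : Type) [Field F] [Fintype F] (n : ℕ) (hn : 3 ≤ n)
    (a : Fin n → Polynomial F)
    (d : ℕ) (hd : d = Finset.univ.sup fun i => (a i).natDegree)
    (habs : ∀ i, (a i).degree ≤ (Finset.univ.erase i).sup fun j => (a j).degree)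
    (hirr : ∀ p : Polynomial F, Irreducible p →
      (Finset.univ.filter fun i => p ∣ a i).card ≤ n - 2)
    (N : ℕ) (hN : d ≤ N) (j : Fin n) (xj : Polynomial F)
    (hxj : xj.degree < (N : WithBot ℕ)) :
    Set.ncard {x : Fin n → Polynomial F |
        x j = xj ∧ (∀ i, (x i).degree < (N : WithBot ℕ)) ∧ ∑ i, a i * x i = 0} =
      Fintype.card F ^ (N * (n - 2) - d) := by
  have : Nontrivial (Fin n) := Fin.nontrivial_iff_two_le.2 (by omega)
  obtain ⟨i₀, hi₀j, hi₀⟩ :=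
    Finset.exists_ne_forall_le_of_le_sup_erase (f := fun i => (a i).degree) (habs j)
  have hi₀d : (a i₀).natDegree = d :=
    hd ▸ le_antisymm (Finset.le_sup (f := fun i => (a i).natDegree) (Finset.mem_univ _))
      (Finset.sup_le fun i _ => natDegree_le_natDegree (hi₀ i))
  have hspan : Ideal.span (Set.range fun i : {i // i ≠ j} => a i) = ⊤ := by
    by_contra hspan
    obtain ⟨p, hp, hdvd⟩ := Ideal.exists_irreducible_forall_dvd_of_span_ne_top (not_isField F) hspan
    have hsub : Finset.univ.erase j ⊆ Finset.univ.filter fun i => p ∣ a i := fun i hi =>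
      Finset.mem_filter.2 ⟨Finset.mem_univ i, hdvd _ ⟨⟨i, Finset.ne_of_mem_erase hi⟩, rfl⟩⟩
    have hle := (Finset.card_le_card hsub).trans (hirr p hp)
    rw [Finset.card_erase_of_mem (Finset.mem_univ j), Finset.card_univ, Fintype.card_fin] at hle
    omega
  have hdeg : (-(a j * xj)).degree < ↑(N + (a i₀).natDegree) := by
    rw [degree_neg]
    exact degree_mul_lt_of_le_of_lt ((hi₀ j).trans degree_le_natDegree) hxj
  have hcard : Fintype.card {i // i ≠ j} = n - 2 + 1 := by
    simp only [ne_eq, Fintype.card_subtype_compl, Fintype.card_fin, Fintype.card_unique]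
    omega
  rw [ncard_setOf_apply_eq_and_sum_mul_eq_zero a (fun p => p.degree < N) j hxj,
    Polynomial.ncard_setOf_sum_mul_eq hspan (i₀ := ⟨i₀, hi₀j⟩) (fun i => hi₀ i) (hi₀d ▸ hN) hdeg,
    hi₀d, hcard, add_one_mul, mul_comm, add_comm N d, Nat.add_sub_add_right]

theorem smyth_count_solutions (F : Type) [Field F] [Fintype F] (n : ℕ) (hn : 3 ≤ n)
    (a : Fin n → Polynomial F)
    (hcop : Ideal.span (Set.range a) = ⊤)
    (d : ℕ) (hd : d = Finset.univ.sup fun i => (a i).natDegree)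
    (habs : ∀ i, (a i).degree ≤ (Finset.univ.erase i).sup fun j => (a j).degree)
    (hirr : ∀ p : Polynomial F, Irreducible p →
      (Finset.univ.filter fun i => p ∣ a i).card ≤ n - 2)
    (N : ℕ) (hN : d ≤ N) (j : Fin n) (xj : Polynomial F)
    (hxj : xj.degree < (N : WithBot ℕ)) :
    Set.ncard {x : Fin n → Polynomial F |
        x j = xj ∧ (∀ i, (x i).degree < (N : WithBot ℕ)) ∧ ∑ i, a i * x i = 0} =
      Fintype.card F ^ (N * (n - 2) - d) :=
  smyth_count_solutions_general F n hn a d hd habs hirr N hN j xj hxj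
end

section
/- Let K be a field, n ≥ 2, and a_1,...,a_n ∈ K. Suppose there exist N×N permutation matrices X_1,...,X_n over K such that det(Σ_{i=1}^n a_i X_i) = 0. Then there exists a nonempty finite multiset of nonzero solutions {(x_{i1},...,x_{in})}_{i=1}^N in K^n to Σ_j a_j x_j = 0 such that for each coordinate position j, the multiset {x_{ij} : 1 ≤ i ≤ N} is the same (independent of j). -/
/-- A balanced multiset of tuples with respect to coefficients `a : Fin n → K`:
a nonempty multiset of nonzero solutions of `∑ i, a i * x i = 0` such that the
multiset of `j`-th coordinates is independent of `j`. -/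
def IsBalanced {K : Type*} [Field K] {n : ℕ} (a : Fin n → K)
    (S : Multiset (Fin n → K)) : Prop :=
  S ≠ 0 ∧ (∀ v ∈ S, v ≠ 0 ∧ ∑ i, a i * v i = 0) ∧
    ∀ j k : Fin n, S.map (fun v => v j) = S.map (fun v => v k)

theorem perm_matrices_to_balanced (K : Type*) [Field K] (n N : ℕ) (hn : 2 ≤ n)
    (a : Fin n → K) (σ : Fin n → Equiv.Perm (Fin N))
    (hdet : Matrix.det
      (∑ i, a i • Matrix.of fun r s : Fin N => if σ i r = s then (1 : K) else 0) = 0) :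
    ∃ S : Multiset (Fin n → K), IsBalanced a S := by
  classical
  obtain ⟨v, hv, hMv⟩ := Matrix.exists_mulVec_eq_zero_iff.2 hdet
  -- each row gives a solution
  have hrow : ∀ r : Fin N, ∑ i, a i * v (σ i r) = 0 := by
    intro r
    have h := congrFun hMv r
    have h1 : (∑ s, ∑ i, (a i * (if σ i r = s then (1 : K) else 0)) * v s) = 0 := by
      simpa [Matrix.mulVec, dotProduct, Matrix.sum_apply, Matrix.smul_apply,
        smul_eq_mul, Finset.sum_mul] using h
    rw [Finset.sum_comm] at h1
    rw [← h1]
    refine Finset.sum_congr rfl fun i _ => ?_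
    rw [Finset.sum_eq_single (σ i r) (fun s _ hs => by simp [Ne.symm hs]) (by simp)]
    simp
  set u : Fin N → (Fin n → K) := fun r i => v (σ i r) with hu
  set T : Multiset (Fin n → K) := Finset.univ.val.map u with hT
  set S : Multiset (Fin n → K) := T.filter (fun w => w ≠ 0) with hS
  refine ⟨S, ?_, ?_, ?_⟩
  · -- nonempty
    obtain ⟨s, hs⟩ := Function.ne_iff.1 hv
    have hn' : 0 < n := by omega
    set i0 : Fin n := ⟨0, hn'⟩
    set r : Fin N := (σ i0).symm s with hr
    have hur : u r ≠ 0 := by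
      intro h
      apply hs
      have := congrFun h i0
      simpa [u, hr] using this
    have hmem : u r ∈ S := by
      rw [hS]
      refine Multiset.mem_filter.2 ⟨?_, hur⟩
      exact Multiset.mem_map_of_mem u (Finset.mem_univ_val r)
    exact fun h => by simp [h] at hmem
  · -- each member is a nonzero solution
    intro w hw
    rw [hS] at hw
    obtain ⟨hwT, hw0⟩ := Multiset.mem_filter.1 hw
    refine ⟨hw0, ?_⟩
    obtain ⟨r, _, rfl⟩ := Multiset.mem_map.1 hwT
    exact hrow r
  · -- balanced
    intro j k
    have key : ∀ j : Fin n, T.map (fun w => w j) = Finset.univ.val.map v := by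
      intro j
      rw [hT, Multiset.map_map]
      have : (fun w => w j) ∘ u = v ∘ (σ j) := rfl
      rw [this, ← Multiset.map_map]
      congr 1
      have := congrArg Finset.val (Finset.map_univ_equiv (σ j))
      simpa [Finset.map_val] using this
    have hsplit : ∀ j : Fin n,
        S.map (fun w => w j) + Multiset.replicate (Multiset.card (T.filter (fun w => ¬ w ≠ 0))) 0
          = Finset.univ.val.map v := by
      intro j
      have hzmap : (T.filter (fun w => ¬ w ≠ 0)).map (fun w => w j)
          = Multiset.replicate (Multiset.card (T.filter (fun w => ¬ w ≠ 0))) 0 := by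
        refine Multiset.eq_replicate.2 ⟨by simp, ?_⟩
        intro b hb
        obtain ⟨w, hw, rfl⟩ := Multiset.mem_map.1 hb
        have := (Multiset.mem_filter.1 hw).2
        simp only [not_not] at this
        simp [this]
      rw [← hzmap, ← Multiset.map_add, hS]
      rw [Multiset.filter_add_not]
      exact key j
    have := (hsplit j).trans (hsplit k).symm
    exact add_right_cancel this
end

section
/- Let K be a field, n ≥ 2, and a_1,...,a_n ∈ K. Suppose there exists a balanced multiset of tuples of size N with respect to (a_1,...,a_n). Then there exist N×N permutation matrices X_1,...,X_n over K such that det(Σ_{i=1}^n a_i X_i) = 0. -/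
/-
Enumerate the balanced multiset as the rows v₁, …, v_N of an N × n array and fix a column j₀
containing a nonzero entry. Every column is a rearrangement of column j₀, say column i is
column j₀ composed with a permutation σᵢ of the rows. Then the column vector w := column j₀ is
nonzero and, row by row, (∑ aᵢ Pσᵢ) w = ∑ aᵢ · (column i) = 0, so ∑ aᵢ Pσᵢ is singular.
-/

open Finset Matrix

theorem exists_perm_comp_eq_of_map_univ_eq {ι α : Type*} [Fintype ι] {f g : ι → α}
    (h : univ.val.map f = univ.val.map g) : ∃ σ : Equiv.Perm ι, f ∘ σ = g := by
  classical
  have hfiber : ∀ c, Fintype.card {x // g x = c} = Fintype.card {x // f x = c} := by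
    intro c
    simpa [Fintype.card_subtype, Multiset.count_map, card_def, filter_val, eq_comm] using
      congrArg (Multiset.count c) h.symm
  exact ⟨Equiv.ofFiberEquiv fun c => Fintype.equivOfCardEq (hfiber c),
    funext (Equiv.ofFiberEquiv_map _)⟩

theorem Multiset.exists_eq_map_univ_fin {α : Type*} {N : ℕ} {S : Multiset α}
    (hcard : Multiset.card S = N) : ∃ v : Fin N → α, S = univ.val.map v := by
  subst hcard
  refine ⟨fun r => S.toList.get (r.cast (Multiset.length_toList S).symm), ?_⟩
  rw [Fin.univ_val_map, ← List.ofFn_congr (Multiset.length_toList S), List.ofFn_get,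
    Multiset.coe_toList]

theorem Matrix.of_ite_eq_permMatrix {ι R : Type*} [DecidableEq ι] [Zero R] [One R]
    (σ : Equiv.Perm ι) :
    (Matrix.of fun r s : ι => if σ r = s then (1 : R) else 0) = σ.permMatrix R := by
  ext r s
  simp [PEquiv.toMatrix_apply, Equiv.toPEquiv_apply]

theorem Matrix.det_sum_smul_permMatrix_eq_zero {ι m R : Type*} [Fintype ι] [DecidableEq ι]
    [Fintype m] [CommRing R] [IsDomain R] (a : m → R) (σ : m → Equiv.Perm ι) {w : ι → R}
    (hw : w ≠ 0) (h : ∀ r, ∑ i, a i * w (σ i r) = 0) :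
    det (∑ i, a i • (σ i).permMatrix R) = 0 := by
  refine exists_mulVec_eq_zero_iff.mp ⟨w, hw, funext fun r => ?_⟩
  simpa [Matrix.sum_mulVec, Matrix.smul_mulVec, permMatrix_mulVec] using h r

theorem Matrix.exists_det_sum_smul_permMatrix_eq_zero {ι m R : Type*} [Fintype ι]
    [DecidableEq ι] [Fintype m] [CommRing R] [IsDomain R] (a : m → R) {v : ι → m → R}
    (hv : v ≠ 0) (hsol : ∀ r, ∑ i, a i * v r i = 0)
    (hcol : ∀ i j, univ.val.map (fun r => v r i) = univ.val.map (fun r => v r j)) :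
    ∃ σ : m → Equiv.Perm ι, det (∑ i, a i • (σ i).permMatrix R) = 0 := by
  obtain ⟨r₀, hr₀⟩ := Function.ne_iff.mp hv
  obtain ⟨j₀, hj₀⟩ := Function.ne_iff.mp hr₀
  choose σ hσ using fun i => exists_perm_comp_eq_of_map_univ_eq (hcol j₀ i)
  refine ⟨σ, det_sum_smul_permMatrix_eq_zero a σ (w := fun r => v r j₀)
    (Function.ne_iff.mpr ⟨r₀, hj₀⟩) fun r => ?_⟩
  simpa only [← congrFun (hσ _) r, Function.comp_apply] using hsol r

theorem balanced_to_perm_matrices_general (K : Type*) [Field K] (n N : ℕ)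
    (a : Fin n → K) (S : Multiset (Fin n → K)) (hS : IsBalanced a S)
    (hcard : Multiset.card S = N) :
    ∃ σ : Fin n → Equiv.Perm (Fin N),
      Matrix.det
        (∑ i, a i • Matrix.of fun r s : Fin N => if σ i r = s then (1 : K) else 0) = 0 := by
  obtain ⟨hne, hsol, hcol⟩ := hS
  obtain ⟨v, rfl⟩ := Multiset.exists_eq_map_univ_fin hcard
  obtain ⟨x, hx⟩ := Multiset.exists_mem_of_ne_zero hne
  obtain ⟨r₀, -, rfl⟩ := Multiset.mem_map.mp hx
  simp only [Matrix.of_ite_eq_permMatrix]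
  refine exists_det_sum_smul_permMatrix_eq_zero a (Function.ne_iff.mpr ⟨r₀, (hsol _ hx).1⟩)
    (fun r => (hsol _ (Multiset.mem_map_of_mem _ (mem_univ_val r))).2) fun i j => ?_
  simpa only [Multiset.map_map, Function.comp_def] using hcol i j

theorem balanced_to_perm_matrices (K : Type*) [Field K] (n N : ℕ) (hn : 2 ≤ n)
    (a : Fin n → K) (S : Multiset (Fin n → K)) (hS : IsBalanced a S)
    (hcard : Multiset.card S = N) :
    ∃ σ : Fin n → Equiv.Perm (Fin N),
      Matrix.det
        (∑ i, a i • Matrix.of fun r s : Fin N => if σ i r = s then (1 : K) else 0) = 0 :=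
  balanced_to_perm_matrices_general K n N a S hS hcard
end

section
/- Let (a_1, a_2) ∈ ℤ^2 be a pair of coprime integers. Then there exist Galois conjugates γ_1, γ_2 over ℚ (nonzero roots of a common irreducible polynomial over ℚ) with a_1 γ_1 + a_2 γ_2 = 0 if and only if a_1 = a_2 or a_1 = -a_2. -/
/-!
If `γ₂ = c γ₁` with `c ∈ ℚ` and both are roots of the minimal polynomial `m` of `γ₁`, then
`m(cX)` is divisible by `m` and has the same degree, so `m(cX) = cⁿ m(X)` with `n = deg m`.
Comparing constant terms, and using `m(0) ≠ 0` because `γ₁ ≠ 0`, gives `cⁿ = 1`, so `c = ±1`.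
Conversely, `a i + a (-i) = 0` and `a · 1 + (-a) · 1 = 0`.
-/

open Polynomial

section minpoly

variable {K L : Type*} [Field K] [Field L] [Algebra K L]

theorem isConjRoot_of_irreducible {p : K[X]} (hp : Irreducible p) {x y : L}
    (hx : aeval x p = 0) (hy : aeval y p = 0) : IsConjRoot K x y := by
  rw [isConjRoot_def, ← minpoly.eq_of_irreducible hp hx, minpoly.eq_of_irreducible hp hy]

theorem minpoly_comp_C_mul_X {x : L} (hx : IsIntegral K x) {c : K} (hc : c ≠ 0)
    (h : aeval (algebraMap K L c * x) (minpoly K x) = 0) :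
    (minpoly K x).comp (C c * X) = C (c ^ (minpoly K x).natDegree) * minpoly K x := by
  have hdeg : (C c * X).natDegree = 1 := natDegree_C_mul_X c hc
  have hdvd : minpoly K x ∣ (minpoly K x).comp (C c * X) :=
    minpoly.dvd K x (by simpa only [aeval_comp, map_mul, aeval_C, aeval_X] using h)
  have hlead : ((minpoly K x).comp (C c * X)).leadingCoeff = c ^ (minpoly K x).natDegree := by
    rw [leadingCoeff_comp (by rw [hdeg]; exact one_ne_zero), leadingCoeff_C_mul_X,
      (minpoly.monic hx).leadingCoeff, one_mul]
  rw [← hlead]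
  exact eq_leadingCoeff_mul_of_monic_of_dvd_of_natDegree_le (minpoly.monic hx) hdvd
    (by rw [natDegree_comp, hdeg, mul_one])

theorem IsConjRoot.pow_natDegree_minpoly_eq_one {x : L} {c : K}
    (h : IsConjRoot K x (algebraMap K L c * x)) (hx : IsIntegral K x) (hx0 : x ≠ 0) :
    c ^ (minpoly K x).natDegree = 1 := by
  have hm0 : (minpoly K x).coeff 0 ≠ 0 := minpoly.coeff_zero_ne_zero hx hx0
  have hroot := h.aeval_eq_zero
  have hc : c ≠ 0 := by
    rintro rfl
    rw [map_zero, zero_mul, ← coeff_zero_eq_aeval_zero', map_eq_zero] at hroot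
    exact hm0 hroot
  have hcoeff := congrArg (coeff · 0) (minpoly_comp_C_mul_X hx hc hroot)
  simp only [coeff_zero_eq_eval_zero, eval_comp, eval_mul, eval_C, eval_X, mul_zero] at hcoeff
  rw [← coeff_zero_eq_eval_zero] at hcoeff
  exact (mul_eq_right₀ hm0).1 hcoeff.symm

variable [LinearOrder K] [IsStrictOrderedRing K]

theorem IsConjRoot.eq_one_or_eq_neg_one_of_algebraMap_mul {x : L} {c : K}
    (h : IsConjRoot K x (algebraMap K L c * x)) (hx : IsIntegral K x) (hx0 : x ≠ 0) :
    c = 1 ∨ c = -1 :=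
  ((pow_eq_one_iff_of_ne_zero (minpoly.natDegree_pos hx).ne').1
    (h.pow_natDegree_minpoly_eq_one hx hx0)).imp_right And.left

theorem IsConjRoot.eq_or_eq_neg_of_algebraMap_mul_add_eq_zero {x y : L} (h : IsConjRoot K x y)
    (hx : IsIntegral K x) (hx0 : x ≠ 0) {a b : K}
    (hab : algebraMap K L a * x + algebraMap K L b * y = 0) : a = b ∨ a = -b := by
  rcases eq_or_ne b 0 with rfl | hb
  · left
    simpa [hx0] using hab
  have hy : y = algebraMap K L (-a / b) * x := by
    have hb' : algebraMap K L b ≠ 0 := (_root_.map_ne_zero _).2 hb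
    rw [map_div₀, map_neg]
    field_simp
    linear_combination hab
  rcases (hy ▸ h).eq_one_or_eq_neg_one_of_algebraMap_mul hx hx0 with hc | hc
  · right
    rw [div_eq_one_iff_eq hb] at hc
    exact neg_eq_iff_eq_neg.1 hc
  · left
    rw [div_eq_iff hb, neg_mul, one_mul, neg_inj] at hc
    exact hc

end minpoly

theorem aeval_cyclotomic_rat_eq_zero {n : ℕ} (hn : 0 < n) {μ : ℂ} (hμ : IsPrimitiveRoot μ n) :
    aeval μ (cyclotomic n ℚ) = 0 := by
  rw [cyclotomic_eq_minpoly_rat hμ hn]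
  exact minpoly.aeval ℚ μ

theorem smyth_pair_iff_general (a₁ a₂ : ℤ) :
    (∃ (p : Polynomial ℚ) (γ₁ γ₂ : ℂ), Irreducible p ∧ γ₁ ≠ 0 ∧ γ₂ ≠ 0 ∧
      Polynomial.aeval γ₁ p = 0 ∧ Polynomial.aeval γ₂ p = 0 ∧
      (a₁ : ℂ) * γ₁ + (a₂ : ℂ) * γ₂ = 0) ↔ a₁ = a₂ ∨ a₁ = -a₂ := by
  constructor
  · rintro ⟨p, γ₁, γ₂, hp, hγ₁, -, hp₁, hp₂, hsum⟩
    have hγ₁_int : IsIntegral ℚ γ₁ := IsAlgebraic.isIntegral ⟨p, hp.ne_zero, hp₁⟩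
    have hconj : IsConjRoot ℚ γ₁ γ₂ := isConjRoot_of_irreducible hp hp₁ hp₂
    exact_mod_cast hconj.eq_or_eq_neg_of_algebraMap_mul_add_eq_zero hγ₁_int hγ₁
      (a := (a₁ : ℚ)) (b := a₂) (by rwa [map_intCast, map_intCast])
  · rintro (rfl | rfl)
    · exact ⟨cyclotomic 4 ℚ, Complex.I, -Complex.I, cyclotomic.irreducible_rat four_pos,
        Complex.I_ne_zero, neg_ne_zero.2 Complex.I_ne_zero,
        aeval_cyclotomic_rat_eq_zero four_pos Complex.isPrimitiveRoot_I,
        aeval_cyclotomic_rat_eq_zero four_pos Complex.isPrimitiveRoot_neg_I, by ring⟩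
    · exact ⟨X - C 1, 1, 1, irreducible_X_sub_C 1, one_ne_zero, one_ne_zero,
        by simp, by simp, by push_cast; ring⟩

theorem smyth_pair_iff (a₁ a₂ : ℤ) (h : IsCoprime a₁ a₂) :
    (∃ (p : Polynomial ℚ) (γ₁ γ₂ : ℂ), Irreducible p ∧ γ₁ ≠ 0 ∧ γ₂ ≠ 0 ∧
      Polynomial.aeval γ₁ p = 0 ∧ Polynomial.aeval γ₂ p = 0 ∧
      (a₁ : ℂ) * γ₁ + (a₂ : ℂ) * γ₂ = 0) ↔ a₁ = a₂ ∨ a₁ = -a₂ :=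
  smyth_pair_iff_general a₁ a₂
end

section
/- Let L/K be a finite Galois extension of fields with K infinite and Galois group isomorphic to the symmetric group S_d acting on the d conjugates α_1,...,α_d of a generator α of degree d (with L the splitting field of the minimal polynomial of α). Then there exist conjugate elements β_1,...,β_d generating L over K with β_1 + β_2 + ... + β_d ≠ 0. -/
/-!
Take `β i = q (α i)` with `q = X + c X ^ k ∈ K[X]`. The `α i` are distinct, so by Vandermonde some
power sum `∑ α i ^ k` is nonzero, and as `K` is infinite, `c` can avoid the finitely many values
for which two `β i` coincide or `∑ β i` vanishes. Since `q` has coefficients in `K`, the Galois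
orbit of `β 0` is the image under `q` of the orbit `{α i}` of `α`, so the `β i` are exactly the
conjugates of `β 0`; and an automorphism fixing every `β i` permutes the `α i` without moving
their images under the injective map `q`, so it fixes every `α i`, whence `K(β) = L`.
-/

open Polynomial

open Function Matrix in
theorem exists_sum_pow_ne_zero {R : Type*} [CommRing R] [IsDomain R] {n : ℕ} [NeZero n]
    {v : Fin n → R} (hv : Injective v) : ∃ k : ℕ, ∑ i, v i ^ k ≠ 0 := by
  by_contra! h
  have hdet : (vandermonde v)ᵀ.det ≠ 0 := by rwa [det_transpose, det_vandermonde_ne_zero_iff]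
  have hker : (vandermonde v)ᵀ *ᵥ (fun _ => 1) = 0 := by
    funext j
    simpa [mulVec, dotProduct, vandermonde] using h j
  exact one_ne_zero (congrFun (eq_zero_of_mulVec_eq_zero hdet hker) 0)

theorem exists_forall_fst_add_algebraMap_mul_snd_ne_zero (K : Type*) {L : Type*} [Field K]
    [Infinite K] [Field L] [Algebra K L] {s : Set (L × L)} (hs : s.Finite) (h0 : (0 : L × L) ∉ s) :
    ∃ c : K, ∀ p ∈ s, p.1 + algebraMap K L c * p.2 ≠ 0 := by
  have hbad : ∀ p ∈ s, {c : K | p.1 + algebraMap K L c * p.2 = 0}.Subsingleton := by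
    rintro p hp c₁ (hc₁ : _ = (0 : L)) c₂ (hc₂ : _ = (0 : L))
    have hsnd : p.2 ≠ 0 := by
      rintro h
      rw [h, mul_zero, add_zero] at hc₁
      exact h0 (by convert hp; ext <;> simp [hc₁, h])
    apply (algebraMap K L).injective
    apply mul_right_cancel₀ hsnd
    linear_combination hc₁ - hc₂
  obtain ⟨c, hc⟩ := ((hs.biUnion fun p hp => (hbad p hp).finite).infinite_compl).nonempty
  simp only [Set.mem_compl_iff, Set.mem_iUnion, Set.mem_ofPred_eq, not_exists] at hc
  exact ⟨c, hc⟩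

theorem exists_polynomial_injective_aeval_and_sum_ne_zero (K : Type*) {L : Type*} [Field K]
    [Infinite K] [Field L] [Algebra K L] {n : ℕ} [NeZero n] {v : Fin n → L}
    (hv : Function.Injective v) :
    ∃ q : K[X], (Function.Injective fun i => aeval (v i) q) ∧ ∑ i, aeval (v i) q ≠ 0 := by
  obtain ⟨k, hk⟩ := exists_sum_pow_ne_zero hv
  -- `q = X + c X ^ k`, with `c` avoiding one bad value per pair `i ≠ j` and one for the sum.
  obtain ⟨c, hc⟩ := exists_forall_fst_add_algebraMap_mul_snd_ne_zero K
    (s := insert (∑ i, v i, ∑ i, v i ^ k)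
      (Set.range fun p : {p : Fin n × Fin n // p.1 ≠ p.2} =>
        (v p.1.1 - v p.1.2, v p.1.1 ^ k - v p.1.2 ^ k)))
    ((Set.finite_range _).insert _) (by
      rintro (h | ⟨⟨⟨i, j⟩, hij⟩, h⟩)
      · exact hk (congrArg Prod.snd h).symm
      · exact hij (hv (sub_eq_zero.1 (congrArg Prod.fst h))))
  have hq : ∀ x : L, aeval x (X + C c * X ^ k) = x + algebraMap K L c * x ^ k := by simp
  refine ⟨X + C c * X ^ k, fun i j hij => ?_, ?_⟩
  · by_contra hne
    refine hc _ (Set.mem_insert_of_mem _ ⟨⟨(i, j), hne⟩, rfl⟩) ?_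
    simp only [hq] at hij
    linear_combination hij
  · simpa [hq, Finset.sum_add_distrib, Finset.mul_sum] using hc _ (Set.mem_insert _ _)

theorem aeval_eq_zero_iff_mem_range {K L ι : Type*} [Field K] [Field L] [Algebra K L] [Fintype ι]
    {p : K[X]} {r : ι → L} (hp : p.map (algebraMap K L) = ∏ i, (X - C (r i))) (y : L) :
    aeval y p = 0 ↔ y ∈ Set.range r := by
  rw [aeval_def, eval₂_eq_eval_map, hp, eval_prod, Finset.prod_eq_zero_iff]
  simp [sub_eq_zero, eq_comm]

section Galois

variable {K L : Type*} [Field K] [Field L] [Algebra K L]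

theorem aeval_minpoly_eq_zero_iff_mem_orbit [Normal K L] {x y : L} :
    aeval y (minpoly K x) = 0 ↔ y ∈ MulAction.orbit Gal(L/K) x := by
  rw [← isConjRoot_iff_aeval_eq_zero (Algebra.IsIntegral.isIntegral x), IsConjRoot, eq_comm,
    Normal.minpoly_eq_iff_mem_orbit]

theorem orbit_aeval (q : K[X]) (x : L) :
    MulAction.orbit Gal(L/K) (aeval x q) = (fun y => aeval y q) '' MulAction.orbit Gal(L/K) x := by
  simp only [MulAction.orbit, ← Set.range_comp]
  congr with σ
  exact (aeval_algHom_apply σ x q).symm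

theorem map_minpoly_eq_prod_iff [IsGalois K L] {ι : Type*} [Fintype ι] (x : L) (r : ι → L) :
    (minpoly K x).map (algebraMap K L) = ∏ i, (X - C (r i)) ↔
      Function.Injective r ∧ Set.range r = MulAction.orbit Gal(L/K) x := by
  have hsep : ((minpoly K x).map (algebraMap K L)).Separable :=
    Separable.map (Algebra.IsSeparable.isSeparable K x)
  constructor
  · intro h
    refine ⟨separable_prod_X_sub_C_iff.1 (h ▸ hsep), Set.ext fun y => ?_⟩
    rw [← aeval_eq_zero_iff_mem_range h, aeval_minpoly_eq_zero_iff_mem_orbit]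
  · rintro ⟨hr, hrange⟩
    have hmonic := (minpoly.monic (Algebra.IsIntegral.isIntegral (R := K) x)).map (algebraMap K L)
    have hroots : (minpoly K x).aroots L = Finset.univ.val.map r := by
      refine (Multiset.Nodup.ext (nodup_roots hsep) (Finset.univ.nodup.map hr)).2 fun y => ?_
      rw [mem_aroots, aeval_minpoly_eq_zero_iff_mem_orbit, ← hrange]
      simp [minpoly.ne_zero (Algebra.IsIntegral.isIntegral (R := K) x)]
    rw [(Normal.splits inferInstance x).eq_prod_roots_of_monic hmonic, ← aroots_def, hroots,
      Multiset.map_map]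
    rfl

theorem adjoin_range_aeval_eq_top [FiniteDimensional K L] [IsGalois K L] {ι : Type*}
    {r : ι → L} {x : L} (hr : Set.range r = MulAction.orbit Gal(L/K) x)
    (hgen : IntermediateField.adjoin K (Set.range r) = ⊤) {q : K[X]}
    (hq : Function.Injective fun i => aeval (r i) q) :
    IntermediateField.adjoin K (Set.range fun i => aeval (r i) q) = ⊤ := by
  set F := IntermediateField.adjoin K (Set.range fun i => aeval (r i) q)
  rw [eq_top_iff, ← hgen, IntermediateField.adjoin_le_iff, Set.range_subset_iff]
  intro i
  rw [SetLike.mem_coe, ← IsGalois.fixedField_fixingSubgroup F, IntermediateField.mem_fixedField_iff]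
  intro σ hσ
  obtain ⟨j, hj⟩ : σ (r i) ∈ Set.range r := by
    rw [hr]
    exact MulAction.mem_orbit_of_mem_orbit σ (hr ▸ Set.mem_range_self i)
  have hσq : σ (aeval (r i) q) = aeval (r i) q :=
    (IntermediateField.mem_fixingSubgroup_iff F σ).1 hσ _
      (IntermediateField.subset_adjoin K _ ⟨i, rfl⟩)
  have hji : j = i := hq (by simpa [hj, ← aeval_algHom_apply] using hσq)
  exact hji ▸ hj.symm

end Galois

theorem exists_generating_conjugates_with_nonzero_sum_general (K L : Type*) [Field K] [Field L]
    [Algebra K L] [FiniteDimensional K L] [IsGalois K L] [Infinite K]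
    (d : ℕ) (hd : 0 < d) (α : L) (αs : Fin d → L)
    (hroots : (minpoly K α).map (algebraMap K L) = ∏ i, (X - C (αs i)))
    (hgen : IntermediateField.adjoin K (Set.range αs) = ⊤) :
    ∃ β : Fin d → L,
      (minpoly K (β ⟨0, hd⟩)).map (algebraMap K L) = ∏ i, (X - C (β i)) ∧
      IntermediateField.adjoin K (Set.range β) = ⊤ ∧
      ∑ i, β i ≠ 0 := by
  have : NeZero d := ⟨hd.ne'⟩
  obtain ⟨hinj, hrange⟩ := (map_minpoly_eq_prod_iff α αs).1 hroots
  obtain ⟨q, hq, hsum⟩ := exists_polynomial_injective_aeval_and_sum_ne_zero K hinj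
  have hrange_q : Set.range (fun i => aeval (αs i) q) =
      MulAction.orbit Gal(L/K) (aeval (αs ⟨0, hd⟩) q) := by
    change Set.range ((fun y => aeval y q) ∘ αs) = _
    rw [Set.range_comp, orbit_aeval, MulAction.orbit_eq_iff.2 (hrange ▸ Set.mem_range_self _),
      hrange]
  exact ⟨fun i => aeval (αs i) q, (map_minpoly_eq_prod_iff _ _).2 ⟨hq, hrange_q⟩,
    adjoin_range_aeval_eq_top hrange hgen hq, hsum⟩

theorem exists_generating_conjugates_with_nonzero_sum (K L : Type*) [Field K] [Field L]
    [Algebra K L] [FiniteDimensional K L] [IsGalois K L] [Infinite K]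
    (d : ℕ) (hd : 0 < d) (α : L) (αs : Fin d → L)
    (hroots : (minpoly K α).map (algebraMap K L) = ∏ i, (X - C (αs i)))
    (hgen : IntermediateField.adjoin K (Set.range αs) = ⊤)
    (hGal : Nonempty ((L ≃ₐ[K] L) ≃* Equiv.Perm (Fin d))) :
    ∃ β : Fin d → L,
      (minpoly K (β ⟨0, hd⟩)).map (algebraMap K L) = ∏ i, (X - C (β i)) ∧
      IntermediateField.adjoin K (Set.range β) = ⊤ ∧
      ∑ i, β i ≠ 0 :=
  exists_generating_conjugates_with_nonzero_sum_general K L d hd α αs hroots hgen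
end

section
/- Let K be a number field with ring of integers O_K, let (a_1,...,a_n) ∈ O_K^n, and suppose ω_1,...,ω_n are roots of unity in some extension of K with Σ_{i=1}^n a_i ω_i = 0. If (a_1,...,a_n) admits a balanced multiset of tuples over K, then (ω_1 a_1,...,ω_n a_n) admits a balanced multiset of tuples over K(ω_1,...,ω_n). -/
/-!
Let `G` be a finite group of roots of unity containing every `ω i`. Replacing each tuple `v` of a
balanced multiset by the `|G|` tuples `(g ω_i⁻¹ v_i)_i`, `g ∈ G`, turns a solution of
`∑ a_i v_i = 0` into solutions of `∑ ω_i a_i w_i = 0`, and the `j`-th coordinates of the new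
multiset are `{g v_j : g ∈ G, v ∈ S}`, because `g ↦ g ω_j⁻¹` permutes `G`. This multiset does not
depend on `j`, since the one of `{v_j : v ∈ S}` does not.
-/

lemma exists_pos_common_pow_eq_one {M ι : Type*} [Monoid M] [Fintype ι] {x : ι → M}
    (hx : ∀ i, ∃ m : ℕ, 0 < m ∧ x i ^ m = 1) : ∃ m : ℕ, 0 < m ∧ ∀ i, x i ^ m = 1 := by
  choose m hm hxm using hx
  refine ⟨∏ i, m i, Finset.prod_pos fun i _ => hm i, fun i => ?_⟩
  obtain ⟨c, hc⟩ := Finset.dvd_prod_of_mem m (Finset.mem_univ i)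
  rw [hc, pow_mul, hxm, one_pow]

namespace IsBalanced

variable {K L : Type*} [Field K] [Field L] {n : ℕ} {a : Fin n → K} {S : Multiset (Fin n → K)}

lemma map (f : K →+* L) (hS : IsBalanced a S) :
    IsBalanced (fun i => f (a i)) (S.map fun v i => f (v i)) := by
  obtain ⟨hS0, hSv, hSbal⟩ := hS
  refine ⟨by simpa using hS0, ?_, fun j k => ?_⟩
  · simp only [Multiset.mem_map, forall_exists_index, and_imp]
    rintro _ v hv rfl
    refine ⟨fun h => (hSv v hv).1 (funext fun i => f.injective ?_), ?_⟩
    · simpa using congrFun h i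
    · simp only [← map_mul, ← map_sum, (hSv v hv).2, map_zero]
  · simpa only [Multiset.map_map, Function.comp_def] using congrArg (Multiset.map f) (hSbal j k)

end IsBalanced

section UnitTwist

variable {L G : Type*} [Field L] [Group G] [Fintype G] {n : ℕ}

def unitTwist (χ : G →* Lˣ) (u : Fin n → G) (S : Multiset (Fin n → L)) : Multiset (Fin n → L) :=
  S.bind fun v => (Finset.univ : Finset G).val.map fun g i => (χ (g * (u i)⁻¹) : L) * v i

variable (χ : G →* Lˣ) (u : Fin n → G) {S : Multiset (Fin n → L)}

lemma mem_unitTwist {w : Fin n → L} :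
    w ∈ unitTwist χ u S ↔ ∃ v ∈ S, ∃ g : G, (fun i => (χ (g * (u i)⁻¹) : L) * v i) = w := by
  simp [unitTwist]

lemma map_eval_unitTwist (j : Fin n) :
    (unitTwist χ u S).map (fun w => w j) =
      (S.map fun v => v j).bind fun x =>
        (Finset.univ : Finset G).val.map fun g => (χ g : L) * x := by
  rw [unitTwist, Multiset.map_bind, Multiset.bind_map]
  refine Multiset.bind_congr fun v _ => ?_
  conv_lhs => rw [← Multiset.map_univ_val_equiv (Equiv.mulRight (u j)), Multiset.map_map,
    Multiset.map_map]
  congr 1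
  funext g
  simp

lemma IsBalanced.unitTwist {a : Fin n → L} (hS : IsBalanced a S) :
    IsBalanced (fun i => (χ (u i) : L) * a i) (unitTwist χ u S) := by
  obtain ⟨hS0, hSv, hSbal⟩ := hS
  refine ⟨?_, ?_, fun j k => by rw [map_eval_unitTwist, map_eval_unitTwist, hSbal j k]⟩
  · obtain ⟨v, hv⟩ := Multiset.exists_mem_of_ne_zero hS0
    exact fun h => by simpa [h] using (mem_unitTwist χ u).2 ⟨v, hv, 1, rfl⟩
  · rintro _ hw
    obtain ⟨v, hv, g, rfl⟩ := (mem_unitTwist χ u).1 hw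
    refine ⟨fun h => (hSv v hv).1 (funext fun i => ?_), ?_⟩
    · simpa using congrFun h i
    · have hterm : ∀ i, (χ (u i) : L) * a i * ((χ (g * (u i)⁻¹) : L) * v i) = χ g * (a i * v i) :=
        fun i => by
          rw [map_mul, map_inv, Units.val_mul]
          linear_combination (χ g * a i * v i : L) * Units.mul_inv (χ (u i))
      simp only [hterm, ← Finset.mul_sum, (hSv v hv).2, mul_zero]

end UnitTwist

theorem balanced_mul_root_of_unity_general (K : Type*) [Field K]
    (L : Type*) [Field L] [Algebra K L] (n : ℕ)
    (a : Fin n → NumberField.RingOfIntegers K) (ω : Fin n → L)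
    (hω : ∀ i, ∃ m : ℕ, 0 < m ∧ ω i ^ m = 1)
    (S : Multiset (Fin n → K)) (hS : IsBalanced (fun i => (a i : K)) S) :
    ∃ T : Multiset (Fin n → L),
      IsBalanced (fun i => ω i * algebraMap K L (a i : K)) T ∧
      ∀ v ∈ T, ∀ i, v i ∈ IntermediateField.adjoin K (Set.range ω) := by
  set F := IntermediateField.adjoin K (Set.range ω)
  let ωF : Fin n → F := fun i => ⟨ω i, IntermediateField.subset_adjoin _ _ ⟨i, rfl⟩⟩
  obtain ⟨M, hM, hωM⟩ := exists_pos_common_pow_eq_one hω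
  have : NeZero M := ⟨hM.ne'⟩
  have : Fintype (rootsOfUnity M F) := Fintype.ofFinite _
  have hωFM : ∀ i, ωF i ^ M = 1 := fun i => Subtype.ext (hωM i)
  let u : Fin n → rootsOfUnity M F := fun i => rootsOfUnity.mkOfPowEq _ (hωFM i)
  -- Twisting inside `F` rather than `L` keeps every entry in `F` by construction.
  have hT := ((hS.map (algebraMap K F)).unitTwist (rootsOfUnity M F).subtype u).map (algebraMap F L)
  refine ⟨_, by simpa [u, ωF] using hT, fun v hv i => ?_⟩
  obtain ⟨w, -, rfl⟩ := Multiset.mem_map.1 hv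
  exact (w i).2

theorem balanced_mul_root_of_unity (K : Type*) [Field K] [NumberField K]
    (L : Type*) [Field L] [Algebra K L] (n : ℕ)
    (a : Fin n → NumberField.RingOfIntegers K) (ω : Fin n → L)
    (hω : ∀ i, ∃ m : ℕ, 0 < m ∧ ω i ^ m = 1)
    (hsum : ∑ i, algebraMap K L (a i : K) * ω i = 0)
    (S : Multiset (Fin n → K)) (hS : IsBalanced (fun i => (a i : K)) S) :
    ∃ T : Multiset (Fin n → L),
      IsBalanced (fun i => ω i * algebraMap K L (a i : K)) T ∧
      ∀ v ∈ T, ∀ i, v i ∈ IntermediateField.adjoin K (Set.range ω) :=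
  balanced_mul_root_of_unity_general K L n a ω hω S hS
end

section
/- Let q be a prime power and D ≥ 1. There exist pairwise coprime polynomials a, b, c ∈ F_q[t] with c irreducible of degree D, deg(a) ≤ D, deg(b) = D, the maximum of the three degrees achieved at least twice, and such that the image of -a·b^{-1} in (F_q[t]/(c))^* is a multiplicative generator. -/
/-!
Take `a = 1`, `c` monic irreducible of degree `D` (the minimal polynomial of a primitive element
of the degree-`D` extension of `F`), `g` a generator of the cyclic group `(F[X]/(c))ˣ`, and `b` the
lift `c + r` of `-g`, where `deg r < D`. Then `deg b = deg c = D ≥ deg a`, `c ∤ b`, and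
`-a · b⁻¹ = g⁻¹` is again a generator.
-/

open Polynomial

theorem FiniteField.exists_monic_irreducible_natDegree_eq (F : Type*) [Field F] [Finite F]
    {n : ℕ} (hn : n ≠ 0) : ∃ c : F[X], c.Monic ∧ Irreducible c ∧ c.natDegree = n := by
  obtain ⟨p, _⟩ := CharP.exists F
  have : Fact p.Prime := ⟨CharP.char_is_prime F p⟩
  have : NeZero n := ⟨hn⟩
  obtain ⟨α, hα⟩ := Field.exists_primitive_element_of_finite_top F (Extension F p n)
  have hα_int := IsIntegral.of_finite F α
  refine ⟨minpoly F α, minpoly.monic hα_int, minpoly.irreducible hα_int, ?_⟩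
  rw [(Field.primitive_element_iff_minpoly_natDegree_eq F α).mp hα, finrank_extension]

theorem Polynomial.Monic.exists_mk_eq_and_degree_eq {R : Type*} [CommRing R] [Nontrivial R]
    {c : R[X]} (hc : c.Monic) (x : R[X] ⧸ Ideal.span {c}) :
    ∃ b : R[X], Ideal.Quotient.mk _ b = x ∧ b.degree = c.degree := by
  obtain ⟨r, rfl⟩ := Ideal.Quotient.mk_surjective x
  refine ⟨c + r %ₘ c, ?_, degree_add_eq_left_of_degree_lt (degree_modByMonic_lt r hc)⟩
  refine Ideal.Quotient.eq.mpr (Ideal.mem_span_singleton.mpr ⟨1 - r /ₘ c, ?_⟩)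
  linear_combination modByMonic_add_div r c

theorem exists_worst_smyth_triple (F : Type*) [Field F] [Fintype F] (D : ℕ) (hD : 1 ≤ D) :
    ∃ a b c : Polynomial F,
      IsCoprime a b ∧ IsCoprime a c ∧ IsCoprime b c ∧
      Irreducible c ∧ c.natDegree = D ∧
      a.degree ≤ (D : WithBot ℕ) ∧ b.degree = (D : WithBot ℕ) ∧
      (∃ i j : Fin 3, i ≠ j ∧
        (![a, b, c] i).degree = max a.degree (max b.degree c.degree) ∧
        (![a, b, c] j).degree = max a.degree (max b.degree c.degree)) ∧
      ∃ u : (Polynomial F ⧸ Ideal.span {c})ˣ,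
        (u : Polynomial F ⧸ Ideal.span {c}) * Ideal.Quotient.mk (Ideal.span {c}) b =
          Ideal.Quotient.mk (Ideal.span {c}) (-a) ∧ Subgroup.zpowers u = ⊤ := by
  obtain ⟨c, hc_monic, hc_irr, hc_deg⟩ :=
    FiniteField.exists_monic_irreducible_natDegree_eq F (Nat.one_le_iff_ne_zero.mp hD)
  have : Fact (Irreducible c) := ⟨hc_irr⟩
  let : Field (F[X] ⧸ Ideal.span {c}) := Ideal.Quotient.field _
  -- `AdjoinRoot c` is by definition the quotient `F[X] ⧸ Ideal.span {c}`.
  have : Module.Finite F (AdjoinRoot c) := hc_monic.finite_adjoinRoot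
  have : Finite (F[X] ⧸ Ideal.span {c}) := Module.finite_of_finite F (M := AdjoinRoot c)
  obtain ⟨g, hg⟩ := IsCyclic.exists_generator (α := (F[X] ⧸ Ideal.span {c})ˣ)
  obtain ⟨b, hb_mk, hb_deg⟩ := hc_monic.exists_mk_eq_and_degree_eq (-(g : F[X] ⧸ Ideal.span {c}))
  have hc_degree : c.degree = D := by rw [degree_eq_natDegree hc_monic.ne_zero, hc_deg]
  have hbc : IsCoprime b c := by
    refine (hc_irr.coprime_iff_not_dvd.mpr ?_).symm
    rw [← Ideal.Quotient.eq_zero_iff_dvd, hb_mk]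
    exact neg_ne_zero.mpr g.ne_zero
  refine ⟨1, b, c, isCoprime_one_left, isCoprime_one_left, hbc, hc_irr, hc_deg, ?_,
    hb_deg.trans hc_degree, ⟨1, 2, by decide, ?_⟩, g⁻¹, ?_, ?_⟩
  · exact degree_one.trans_le (WithBot.coe_le_coe.mpr D.zero_le)
  · simp [hb_deg, hc_degree]
  · rw [hb_mk, Units.val_inv_eq_inv_val, map_neg, map_one, mul_neg,
      inv_mul_cancel₀ g.ne_zero]
  · rw [Subgroup.zpowers_inv, Subgroup.eq_top_iff']
    exact hg
end

section
/- Let α be an algebraic integer in a number field K of degree m over ℚ, and suppose every archimedean absolute value of α is strictly less than n-1 for some integer n ≥ 3. Then there exists a nonnegative integer square matrix C (of some size l) all of whose row sums equal n-1 and which has α as an eigenvalue (over K). -/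
/-!
Put `r = n - 1 > house α`. Reducing coefficients modulo `r` in a finite generating set of the
`ℤ`-module `ℤ[α]` writes every `y ∈ ℤ[α]` as `r z` plus an element of house at most a
constant `μ`. Hence, for `R` large, the finite set `L` of elements of `ℤ[α]` of house at most
`R` has the property that for each `x ∈ L` we can write `α x = (r - 1) z + u` with `z, u ∈ L`
(take `u = z + (α x - r z)`). Indexing `L` by `Fin l`, the matrix with `r - 1` at `(x, z)` and
`1` at `(x, u)` has row sums `r`, and the vector listing the elements of `L` is an eigenvector
with eigenvalue `α`; it is nonzero because `1 ∈ L`.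
-/

open Finset NumberField

namespace Matrix

variable {ι R : Type*} [DecidableEq ι]

def graphMatrix [Zero R] [One R] (f : ι → ι) : Matrix ι ι R :=
  of fun i j => if f i = j then 1 else 0

theorem map_graphMatrix [AddMonoidWithOne R] (f : ι → ι) :
    (graphMatrix f : Matrix ι ι ℕ).map (Nat.cast : ℕ → R) = graphMatrix f := by
  ext i j
  by_cases h : f i = j <;> simp [graphMatrix, h]

variable [Fintype ι]

theorem graphMatrix_mulVec [NonAssocSemiring R] (f : ι → ι) (w : ι → R) :
    graphMatrix f *ᵥ w = w ∘ f := by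
  ext i
  simp [graphMatrix, mulVec, dotProduct]

theorem sum_graphMatrix_apply [AddCommMonoidWithOne R] (f : ι → ι) (i : ι) :
    ∑ j, graphMatrix (R := R) f i j = 1 := by
  simp [graphMatrix]

theorem sum_nsmul_graphMatrix_add_apply (a b : ℕ) (f g : ι → ι) (i : ι) :
    ∑ j, (a • graphMatrix f + b • graphMatrix g : Matrix ι ι ℕ) i j = a + b := by
  simp only [add_apply, smul_apply, sum_add_distrib, smul_eq_mul, ← mul_sum,
    sum_graphMatrix_apply, mul_one]

theorem map_nsmul_graphMatrix_add_mulVec [CommSemiring R] (a b : ℕ) (f g : ι → ι) (w : ι → R) :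
    (a • graphMatrix f + b • graphMatrix g : Matrix ι ι ℕ).map (Nat.cast : ℕ → R) *ᵥ w =
      a • (w ∘ f) + b • (w ∘ g) := by
  rw [Matrix.map_add _ Nat.cast_add, Matrix.map_smul _ _ (fun x => by simp),
    Matrix.map_smul _ _ (fun x => by simp), map_graphMatrix, map_graphMatrix, add_mulVec,
    smul_mulVec, smul_mulVec, graphMatrix_mulVec, graphMatrix_mulVec]

end Matrix

open Matrix in
theorem exists_fin_matrix_row_sum_eq_mulVec_eq_smul {ι R : Type*} [Finite ι] [CommSemiring R]
    {α : R} {a b : ℕ} {f g : ι → ι} {w : ι → R} (hw0 : w ≠ 0)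
    (hw : ∀ i, α * w i = a * w (f i) + b * w (g i)) :
    ∃ (l : ℕ) (_ : 0 < l) (C : Matrix (Fin l) (Fin l) ℕ), (∀ i, ∑ j, C i j = a + b) ∧
      ∃ v : Fin l → R, v ≠ 0 ∧ (C.map (Nat.cast : ℕ → R)).mulVec v = α • v := by
  classical
  have := Fintype.ofFinite ι
  let e := Fintype.equivFin ι
  obtain ⟨i₀, hi₀⟩ := Function.ne_iff.mp hw0
  refine ⟨Fintype.card ι, Fintype.card_pos_iff.2 ⟨i₀⟩,
    a • graphMatrix (e ∘ f ∘ e.symm) + b • graphMatrix (e ∘ g ∘ e.symm),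
    sum_nsmul_graphMatrix_add_apply a b _ _, w ∘ e.symm, fun h => hi₀ ?_, ?_⟩
  · simpa using congrFun h (e i₀)
  · rw [map_nsmul_graphMatrix_add_mulVec]
    ext i
    simp [hw]

namespace NumberField

variable {K : Type*} [Field K] [NumberField K]

theorem house_sub_le (x y : K) : house (x - y) ≤ house x + house y := by
  simp only [house, map_sub]
  exact norm_sub_le _ _

theorem house_one : house (1 : K) = 1 := by
  simpa using house_intCast (K := K) 1

theorem house_lt_iff {x : K} {B : ℝ} : house x < B ↔ ∀ σ : K →+* ℂ, ‖σ x‖ < B := by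
  refine ⟨fun h σ => (norm_embedding_le_house x σ).trans_lt h, fun h => ?_⟩
  obtain ⟨σ, -, hσ⟩ := exists_mem_eq_sup' univ_nonempty fun φ : K →+* ℂ => ‖φ x‖₊
  rw [house_eq_sup', hσ]
  exact h σ

theorem finite_setOf_isIntegral_house_le (B : ℝ) :
    {x : K | IsIntegral ℤ x ∧ house x ≤ B}.Finite :=
  (Embeddings.finite_of_norm_le K ℂ B).subset fun _ ⟨hx, hB⟩ =>
    ⟨hx, fun σ => (norm_embedding_le_house _ σ).trans hB⟩

theorem exists_mem_span_house_sub_mul_le {s : Finset K} {r : ℕ} (hr : 0 < r) {y : K}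
    (hy : y ∈ Submodule.span ℤ (s : Set K)) :
    ∃ z ∈ Submodule.span ℤ (s : Set K), house (y - r * z) ≤ r * ∑ x ∈ s, house x := by
  obtain ⟨c, -, rfl⟩ := Submodule.mem_span_finset.mp hy
  refine ⟨∑ x ∈ s, (c x / r) • x,
    Submodule.sum_mem _ fun x hx => Submodule.smul_mem _ _ (Submodule.subset_span hx), ?_⟩
  have hrem : ∑ x ∈ s, c x • x - r * ∑ x ∈ s, (c x / r) • x = ∑ x ∈ s, (c x % r) • x := by
    rw [mul_sum, ← sum_sub_distrib]
    refine sum_congr rfl fun x _ => ?_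
    simp only [zsmul_eq_mul, Int.emod_def]
    push_cast
    ring
  rw [hrem, mul_sum]
  refine (house_sum_le_sum_house _ _).trans (sum_le_sum fun x _ => ?_)
  rw [zsmul_eq_mul]
  refine (house_mul_le _ _).trans (mul_le_mul_of_nonneg_right ?_ (house_nonneg x))
  have h0 : 0 ≤ c x % r := Int.emod_nonneg _ (by omega)
  have hlt : c x % r < r := Int.emod_lt_of_pos _ (by omega)
  rw [house_intCast, abs_of_nonneg (by exact_mod_cast h0)]
  exact_mod_cast hlt.le

theorem exists_radius_forall_exists_house_mul_sub_le {A : Subalgebra ℤ K}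
    (hA : (Subalgebra.toSubmodule A).FG) {α : K} (hαA : α ∈ A) {a : ℕ} (hα : house α < a + 1) :
    ∃ R : ℝ, 1 ≤ R ∧
      ∀ x ∈ A, house x ≤ R → ∃ z ∈ A, house z ≤ R ∧ house (α * x - a * z) ≤ R := by
  obtain ⟨s, hs⟩ := hA
  set μ := ((a + 1 : ℕ) : ℝ) * ∑ x ∈ s, house x
  have hμ : 0 ≤ μ := mul_nonneg (Nat.cast_nonneg _) (sum_nonneg fun x _ => house_nonneg x)
  obtain ⟨R, hR1, hR⟩ : ∃ R : ℝ, 1 ≤ R ∧ house α * R + μ ≤ (a + 1) * (R - μ) := by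
    have hgap : 0 < (a + 1 : ℝ) - house α := by linarith
    refine ⟨max 1 ((μ + (a + 1) * μ) / (a + 1 - house α)), le_max_left _ _, ?_⟩
    have := (div_le_iff₀ hgap).1 (le_max_right 1 ((μ + (a + 1) * μ) / (a + 1 - house α)))
    nlinarith
  refine ⟨R, hR1, fun x hx hxR => ?_⟩
  obtain ⟨z, hz, hzμ⟩ := exists_mem_span_house_sub_mul_le (Nat.succ_pos a) (y := α * x)
    (by rw [hs, Subalgebra.mem_toSubmodule]; exact mul_mem hαA hx)
  have hzR : house z ≤ R - μ := by
    refine le_of_mul_le_mul_left ?_ (by positivity : (0 : ℝ) < a + 1)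
    calc (a + 1) * house z = house (((a + 1 : ℕ) : K) * z) := by
          rw [house_nat_mul]; push_cast; rfl
      _ = house (α * x - (α * x - ((a + 1 : ℕ) : K) * z)) := by congr 1; ring
      _ ≤ house (α * x) + house (α * x - ((a + 1 : ℕ) : K) * z) := house_sub_le _ _
      _ ≤ house α * R + μ := by
          gcongr
          exact (house_mul_le _ _).trans (mul_le_mul_of_nonneg_left hxR (house_nonneg α))
      _ ≤ (a + 1) * (R - μ) := hR
  rw [hs, Subalgebra.mem_toSubmodule] at hz
  refine ⟨z, hz, by linarith, ?_⟩
  calc house (α * x - a * z) = house (z + (α * x - ((a + 1 : ℕ) : K) * z)) := by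
        congr 1; push_cast; ring
    _ ≤ house z + house (α * x - ((a + 1 : ℕ) : K) * z) := house_add_le _ _
    _ ≤ R := by linarith

theorem exists_finite_one_mem_forall_mul_sub_mem {α : K} (hα : IsIntegral ℤ α) {a : ℕ}
    (hαa : house α < a + 1) :
    ∃ L : Set K, L.Finite ∧ 1 ∈ L ∧ ∀ x ∈ L, ∃ z ∈ L, α * x - a * z ∈ L := by
  set A := Algebra.adjoin ℤ {α}
  have hA : (Subalgebra.toSubmodule A).FG := hα.fg_adjoin_singleton
  have hαA : α ∈ A := Algebra.self_mem_adjoin_singleton ℤ α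
  obtain ⟨R, hR1, hR⟩ := exists_radius_forall_exists_house_mul_sub_le hA hαA hαa
  refine ⟨{x | x ∈ A ∧ house x ≤ R},
    (finite_setOf_isIntegral_house_le R).subset fun x ⟨hxA, hxR⟩ =>
      ⟨IsIntegral.of_mem_of_fg A hA x hxA, hxR⟩,
    ⟨one_mem A, house_one.trans_le hR1⟩, fun x ⟨hxA, hxR⟩ => ?_⟩
  obtain ⟨z, hzA, hzR, huR⟩ := hR x hxA hxR
  exact ⟨z, ⟨hzA, hzR⟩, sub_mem (mul_mem hαA hxA) (mul_mem (A.natCast_mem a) hzA), huR⟩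

end NumberField

theorem exists_fin_matrix_of_forall_mul_sub_mem {R : Type*} [CommRing R] {α : R} {a : ℕ}
    {L : Set R} (hL : L.Finite) {x₀ : R} (hx₀ : x₀ ∈ L) (hx₀ne : x₀ ≠ 0)
    (hstep : ∀ x ∈ L, ∃ z ∈ L, α * x - a * z ∈ L) :
    ∃ (l : ℕ) (_ : 0 < l) (C : Matrix (Fin l) (Fin l) ℕ), (∀ i, ∑ j, C i j = a + 1) ∧
      ∃ v : Fin l → R, v ≠ 0 ∧ (C.map (Nat.cast : ℕ → R)).mulVec v = α • v := by
  choose z hz hu using hstep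
  have := hL.to_subtype
  refine exists_fin_matrix_row_sum_eq_mulVec_eq_smul (w := ((↑) : L → R))
    (f := fun x => ⟨z x x.2, hz x x.2⟩) (g := fun x => ⟨_, hu x x.2⟩)
    (fun h => hx₀ne (congrFun h ⟨x₀, hx₀⟩)) fun x => ?_
  simp

theorem exists_row_sum_matrix_with_eigenvalue_general (K : Type*) [Field K] [NumberField K]
    (α : K) (hint : IsIntegral ℤ α) (n : ℕ)
    (habs : ∀ σ : K →+* ℂ, ‖σ α‖ < (n : ℝ) - 1) :
    ∃ (l : ℕ) (_ : 0 < l) (C : Matrix (Fin l) (Fin l) ℕ),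
      (∀ i, ∑ j, C i j = n - 1) ∧
      ∃ w : Fin l → K, w ≠ 0 ∧ (C.map (Nat.cast : ℕ → K)).mulVec w = α • w := by
  have hα : house α < (n : ℝ) - 1 := house_lt_iff.2 habs
  have hn : 2 ≤ n := by
    have : (1 : ℝ) < n := by linarith [house_nonneg α]
    exact_mod_cast this
  obtain ⟨L, hLfin, h1L, hL⟩ := exists_finite_one_mem_forall_mul_sub_mem hint (a := n - 2)
    (by push_cast [Nat.cast_sub hn]; linarith)
  obtain ⟨l, hl, C, hC, w, hw0, hw⟩ :=
    exists_fin_matrix_of_forall_mul_sub_mem hLfin h1L one_ne_zero hL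
  exact ⟨l, hl, C, fun i => by rw [hC]; omega, w, hw0, hw⟩

theorem exists_row_sum_matrix_with_eigenvalue (K : Type*) [Field K] [NumberField K]
    (α : K) (hint : IsIntegral ℤ α) (n : ℕ) (hn : 3 ≤ n)
    (habs : ∀ σ : K →+* ℂ, ‖σ α‖ < (n : ℝ) - 1) :
    ∃ (l : ℕ) (_ : 0 < l) (C : Matrix (Fin l) (Fin l) ℕ),
      (∀ i, ∑ j, C i j = n - 1) ∧
      ∃ w : Fin l → K, w ≠ 0 ∧ (C.map (Nat.cast : ℕ → K)).mulVec w = α • w :=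
  exists_row_sum_matrix_with_eigenvalue_general K α hint n habs
end
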